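/- The function f(x) = x^x is completely monotonic on the interval (0, 1/e). -/

import Mathlib

open Set Real

/-- `f` is completely monotonic on `s`: smooth on `s` and `(-1)^n f^(n) ≥ 0` on `s`. -/
def CompletelyMonotonicOn (f : ℝ → ℝ) (s : Set ℝ) : Prop :=
  ContDiffOn ℝ (⊤ : ℕ∞) f s ∧ ∀ (n : ℕ), ∀ x ∈ s, 0 ≤ (-1 : ℝ) ^ n * iteratedDerivWithin n f s x

/-- `f` is absolutely monotonic on `s`: smooth on `s` and all derivatives nonnegative. -/
def AbsolutelyMonotonicOn (f : ℝ → ℝ) (s : Set ℝ) : Prop :=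
  ContDiffOn ℝ (⊤ : ℕ∞) f s ∧ ∀ (n : ℕ), ∀ x ∈ s, 0 ≤ iteratedDerivWithin n f s x

/-- `f` is a Bernstein function on `(0,∞)`. -/
def BernsteinOn (f : ℝ → ℝ) (s : Set ℝ) : Prop :=
  ContDiffOn ℝ (⊤ : ℕ∞) f s ∧ (∀ x ∈ s, 0 ≤ f x) ∧
    ∀ (n : ℕ), 1 ≤ n → ∀ x ∈ s, 0 ≤ (-1 : ℝ) ^ (n - 1) * iteratedDerivWithin n f s x

noncomputable def gg : ℝ → ℝ := fun x => Real.exp (x * Real.log x)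
noncomputable def hh : ℝ → ℝ := fun x => -Real.log x - 1

lemma hut : UniqueDiffOn ℝ (Set.Ioi (0:ℝ)) := isOpen_Ioi.uniqueDiffOn

lemma smooth_gg : ContDiffOn ℝ (⊤ : ℕ∞) gg (Set.Ioi 0) :=
  ((contDiffOn_id.mul (Real.contDiffOn_log.mono (fun x hx => ne_of_gt hx))).exp)

lemma smooth_hh : ContDiffOn ℝ (⊤ : ℕ∞) hh (Set.Ioi 0) :=
  ((Real.contDiffOn_log.mono (fun x (hx : x ∈ Set.Ioi (0:ℝ)) => ne_of_gt hx)).neg.sub contDiffOn_const)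

lemma deriv_gg {x : ℝ} (hx : x ∈ Set.Ioi (0:ℝ)) :
    derivWithin gg (Set.Ioi 0) x = (Real.log x + 1) * gg x := by
  have h1 : HasDerivAt (fun y : ℝ => y * Real.log y) (Real.log x + 1) x := by
    have := (hasDerivAt_id x).mul (Real.hasDerivAt_log (ne_of_gt hx))
    simp only [mul_inv_cancel₀ (ne_of_gt (show (0:ℝ) < x from hx)), id, one_mul] at this
    exact this
  have h2 : HasDerivAt gg (Real.exp (x * Real.log x) * (Real.log x + 1)) x := h1.exp
  rw [h2.hasDerivWithinAt.derivWithin (hut x hx)]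
  unfold gg; ring

lemma hh_iter (k : ℕ) :
    ∀ x ∈ Set.Ioi (0:ℝ), iteratedDerivWithin (k+1) hh (Set.Ioi 0) x
      = -((-1:ℝ)^k * (Nat.factorial k : ℝ) * x ^ (-(k:ℤ)-1)) := by
  induction k with
  | zero =>
    intro x hx
    have h1 : HasDerivAt hh (-x⁻¹) x :=
      ((Real.hasDerivAt_log (ne_of_gt hx)).neg.sub_const 1)
    rw [iteratedDerivWithin_one,
      h1.hasDerivWithinAt.derivWithin (hut x hx)]
    simp [zpow_neg_one]
  | succ k IH =>
    intro x hx
    rw [iteratedDerivWithin_succ]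
    have heq : Set.EqOn (iteratedDerivWithin (k+1) hh (Set.Ioi 0))
        (fun y : ℝ => -((-1:ℝ)^k * (Nat.factorial k : ℝ) * y ^ (-(k:ℤ)-1))) (Set.Ioi 0) := fun y hy => IH y hy
    rw [derivWithin_congr heq (IH x hx), derivWithin_of_isOpen isOpen_Ioi hx]
    have h1 : HasDerivAt (fun y : ℝ => -((-1:ℝ)^k * (Nat.factorial k : ℝ) * y ^ (-(k:ℤ)-1)))
        (-((-1:ℝ)^k * (Nat.factorial k : ℝ) * (((-(k:ℤ)-1) : ℤ) * x ^ ((-(k:ℤ)-1)-1)))) x :=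
      (((hasDerivAt_zpow (-(k:ℤ)-1) x (Or.inl (ne_of_gt hx))).const_mul
        ((-1:ℝ)^k * (Nat.factorial k : ℝ)))).neg
    rw [h1.deriv]
    have : ((-(k:ℤ)-1)-1) = (-((k:ℕ)+1:ℤ)-1) := by push_cast; ring
    rw [this]
    rw [Nat.factorial_succ k]
    push_cast
    ring

lemma hh_sign (k : ℕ) : ∀ x ∈ Set.Ioo (0:ℝ) (Real.exp 1)⁻¹,
    0 ≤ (-1:ℝ)^k * iteratedDerivWithin k hh (Set.Ioi 0) x := by
  intro x hx
  have hx0 : (0:ℝ) < x := hx.1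
  match k with
  | 0 =>
    simp only [pow_zero, one_mul, iteratedDerivWithin_zero]
    have : Real.log x < Real.log (Real.exp 1)⁻¹ := Real.log_lt_log hx0 hx.2
    rw [Real.log_inv, Real.log_exp] at this
    unfold hh; linarith
  | (k+1) =>
    rw [hh_iter k x hx0]
    have hzp : (0:ℝ) < x ^ (-(k:ℤ)-1) := zpow_pos hx0 _
    have hfac : (0:ℝ) < (Nat.factorial k : ℝ) := by positivity
    have : (-1:ℝ)^(k+1) * -((-1:ℝ)^k * (Nat.factorial k : ℝ) * x ^ (-(k:ℤ)-1))
        = (Nat.factorial k : ℝ) * x ^ (-(k:ℤ)-1) := by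
      rw [pow_succ]; ring_nf
      rw [show k * 2 = 2 * k from Nat.mul_comm k 2, pow_mul]; norm_num
    rw [this]
    positivity

lemma mul_sign : ∀ n : ℕ, ∀ f g : ℝ → ℝ, ContDiffOn ℝ (⊤ : ℕ∞) f (Set.Ioi 0) →
    ContDiffOn ℝ (⊤ : ℕ∞) g (Set.Ioi 0) →
    (∀ k ≤ n, ∀ x ∈ Set.Ioo (0:ℝ) (Real.exp 1)⁻¹,
      0 ≤ (-1:ℝ)^k * iteratedDerivWithin k f (Set.Ioi 0) x) →
    (∀ k ≤ n, ∀ x ∈ Set.Ioo (0:ℝ) (Real.exp 1)⁻¹,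
      0 ≤ (-1:ℝ)^k * iteratedDerivWithin k g (Set.Ioi 0) x) →
    ∀ x ∈ Set.Ioo (0:ℝ) (Real.exp 1)⁻¹,
      0 ≤ (-1:ℝ)^n * iteratedDerivWithin n (fun y => f y * g y) (Set.Ioi 0) x := by
  intro n
  induction n with
  | zero =>
    intro f g hf hg hsf hsg x hx
    simpa [iteratedDerivWithin_zero] using
      mul_nonneg (by simpa using hsf 0 le_rfl x hx) (by simpa using hsg 0 le_rfl x hx)
  | succ n IH =>
    intro f g hf hg hsf hsg x hx
    have hxt : x ∈ Set.Ioi (0:ℝ) := hx.1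
    set t := Set.Ioi (0:ℝ)
    have hdf : ContDiffOn ℝ (⊤ : ℕ∞) (derivWithin f t) t := hf.derivWithin hut (by simp)
    have hdg : ContDiffOn ℝ (⊤ : ℕ∞) (derivWithin g t) t := hg.derivWithin hut (by simp)
    -- derivative of the product
    have heq : Set.EqOn (derivWithin (fun y => f y * g y) t)
        (fun y => (-(-derivWithin f t y * g y)) + (-(f y * -derivWithin g t y))) t := by
      intro y hy
      rw [derivWithin_fun_mul
        ((hf.differentiableOn (by simp)) y hy) ((hg.differentiableOn (by simp)) y hy)]
      ring
    rw [iteratedDerivWithin_succ',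
      iteratedDerivWithin_congr heq hxt]
    have hA : ContDiffOn ℝ (⊤ : ℕ∞) (fun y => -(-derivWithin f t y * g y)) t :=
      ((hdf.neg.mul hg)).neg
    have hB : ContDiffOn ℝ (⊤ : ℕ∞) (fun y => -(f y * -derivWithin g t y)) t :=
      ((hf.mul hdg.neg)).neg
    have hadd := iteratedDerivWithin_add hxt hut ((hA.of_le (by exact_mod_cast le_top)) x hxt) ((hB.of_le (by exact_mod_cast le_top)) x hxt)
      (n := n) (f := fun y => -(-derivWithin f t y * g y))
      (g := fun y => -(f y * -derivWithin g t y))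
    rw [show (fun y => (-(-derivWithin f t y * g y)) + (-(f y * -derivWithin g t y)))
        = (fun y => -(-derivWithin f t y * g y)) + (fun y => -(f y * -derivWithin g t y)) from rfl,
      hadd, mul_add]
    have e1 : iteratedDerivWithin n (fun y => -(-derivWithin f t y * g y)) t x
        = -iteratedDerivWithin n (fun y => -derivWithin f t y * g y) t x :=
      iteratedDerivWithin_fun_neg (f := _)
    have e2 : iteratedDerivWithin n (fun y => -(f y * -derivWithin g t y)) t x
        = -iteratedDerivWithin n (fun y => f y * -derivWithin g t y) t x :=
      iteratedDerivWithin_fun_neg (f := _)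
    have sA : 0 ≤ (-1:ℝ)^n * iteratedDerivWithin n (fun y => -derivWithin f t y * g y) t x := by
      refine IH (fun y => -derivWithin f t y) g hdf.neg hg ?_ (fun k hk => hsg k (hk.trans (Nat.le_succ n))) x hx
      intro k hk y hy
      have : iteratedDerivWithin k (fun y => -derivWithin f t y) t y
          = -iteratedDerivWithin (k+1) f t y := by
        rw [iteratedDerivWithin_fun_neg, iteratedDerivWithin_succ']
      rw [this]
      have := hsf (k+1) (Nat.succ_le_succ hk) y hy
      calc (0:ℝ) ≤ (-1:ℝ)^(k+1) * iteratedDerivWithin (k+1) f t y := this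
        _ = (-1:ℝ)^k * -iteratedDerivWithin (k+1) f t y := by ring
    have sB : 0 ≤ (-1:ℝ)^n * iteratedDerivWithin n (fun y => f y * -derivWithin g t y) t x := by
      refine IH f (fun y => -derivWithin g t y) hf hdg.neg
        (fun k hk => hsf k (hk.trans (Nat.le_succ n))) ?_ x hx
      intro k hk y hy
      have : iteratedDerivWithin k (fun y => -derivWithin g t y) t y
          = -iteratedDerivWithin (k+1) g t y := by
        rw [iteratedDerivWithin_fun_neg, iteratedDerivWithin_succ']
      rw [this]
      have := hsg (k+1) (Nat.succ_le_succ hk) y hy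
      calc (0:ℝ) ≤ (-1:ℝ)^(k+1) * iteratedDerivWithin (k+1) g t y := this
        _ = (-1:ℝ)^k * -iteratedDerivWithin (k+1) g t y := by ring
    have r1 : (-1:ℝ)^(n+1) * iteratedDerivWithin n (fun y => -(-derivWithin f t y * g y)) t x
        = (-1:ℝ)^n * iteratedDerivWithin n (fun y => -derivWithin f t y * g y) t x := by
      rw [e1]; ring
    have r2 : (-1:ℝ)^(n+1) * iteratedDerivWithin n (fun y => -(f y * -derivWithin g t y)) t x
        = (-1:ℝ)^n * iteratedDerivWithin n (fun y => f y * -derivWithin g t y) t x := by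
      rw [e2]; ring
    rw [r1, r2]
    exact add_nonneg sA sB

lemma gg_sign : ∀ n : ℕ, ∀ x ∈ Set.Ioo (0:ℝ) (Real.exp 1)⁻¹,
    0 ≤ (-1:ℝ)^n * iteratedDerivWithin n gg (Set.Ioi 0) x := by
  intro n
  induction n using Nat.strong_induction_on with
  | _ n IH =>
    match n with
    | 0 =>
      intro x hx
      simp only [pow_zero, one_mul, iteratedDerivWithin_zero]
      exact (Real.exp_pos _).le
    | (n+1) =>
      intro x hx
      have hxt : x ∈ Set.Ioi (0:ℝ) := hx.1
      set t := Set.Ioi (0:ℝ)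
      have heq : Set.EqOn (derivWithin gg t) (fun y => -(hh y * gg y)) t := by
        intro y hy
        rw [deriv_gg hy]
        unfold hh; ring
      rw [iteratedDerivWithin_succ', iteratedDerivWithin_congr heq hxt,
        iteratedDerivWithin_fun_neg]
      have hms : 0 ≤ (-1:ℝ)^n * iteratedDerivWithin n (fun y => hh y * gg y) t x := by
        refine mul_sign n hh gg smooth_hh smooth_gg (fun k _ => hh_sign k) ?_ x hx
        intro k hk y hy
        exact IH k (Nat.lt_succ_of_le hk) y hy
      calc (0:ℝ) ≤ (-1:ℝ)^n * iteratedDerivWithin n (fun y => hh y * gg y) t x := hms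
        _ = (-1:ℝ)^(n+1) * -iteratedDerivWithin n (fun y => hh y * gg y) t x := by ring

theorem stmt_9 :
    CompletelyMonotonicOn (fun x : ℝ => x ^ x) (Set.Ioo 0 (Real.exp 1)⁻¹) := by
  have heq : Set.EqOn (fun x : ℝ => x ^ x) gg (Set.Ioo 0 (Real.exp 1)⁻¹) := by
    intro x hx
    simp only [gg]
    rw [Real.rpow_def_of_pos hx.1, mul_comm]
  constructor
  · exact (smooth_gg.mono (fun y hy => hy.1)).congr heq
  · intro n x hx
    have hus : UniqueDiffOn ℝ (Set.Ioo (0:ℝ) (Real.exp 1)⁻¹) := isOpen_Ioo.uniqueDiffOn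
    have e1 : iteratedDerivWithin n (fun x : ℝ => x ^ x) (Set.Ioo 0 (Real.exp 1)⁻¹) x
        = iteratedDerivWithin n gg (Set.Ioo 0 (Real.exp 1)⁻¹) x :=
      iteratedDerivWithin_congr heq hx
    have e2 : iteratedDerivWithin n gg (Set.Ioo 0 (Real.exp 1)⁻¹) x
        = iteratedDerivWithin n gg (Set.Ioi 0) x := by
      rw [← Set.Ioi_inter_Iio, iteratedDerivWithin_eq_iteratedFDerivWithin,
        iteratedDerivWithin_eq_iteratedFDerivWithin,
        iteratedFDerivWithin_inter_open isOpen_Iio hx.2]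
    rw [e1, e2]
    exact gg_sign n x hx
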